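/- Let κ₀ > 0 be a real number and suppose κ(x,y) ≥ κ₀ for every pair of adjacent vertices x, y of G. Let d_max and d_min denote the maximum and minimum vertex degrees of G. Then every nonzero real eigenvalue λ of the graph Laplacian (i.e. every λ ≠ 0 for which there exists a function f : V → ℝ, not identically zero, with Δf = λ·f) satisfies λ ≥ d_max·d_min·κ₀² / (κ₀·d_max + 2·(d_max − d_min)). -/

import Mathlib

open Finset Filter Topology

noncomputable section

/-- A coupling between two (probability) mass functions `μ` and `ν` on a finite
vertex set: a matrix with values in `[0,1]` whose row sums are `μ` and whose
column sums are `ν`. -/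
def IsCoupling {V : Type*} [Fintype V] (A : V → V → ℝ) (μ ν : V → ℝ) : Prop :=
  (∀ x y, 0 ≤ A x y ∧ A x y ≤ 1) ∧
  (∀ x, ∑ y, A x y = μ x) ∧
  (∀ y, ∑ x, A x y = ν y)

/-- The (1-)Wasserstein distance between two mass functions on the vertex set of a
graph, with respect to the graph distance. -/
def Wass {V : Type*} [Fintype V] (G : SimpleGraph V) (μ ν : V → ℝ) : ℝ :=
  sInf {c | ∃ A : V → V → ℝ, IsCoupling A μ ν ∧
    c = ∑ x, ∑ y, A x y * (G.dist x y : ℝ)}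

/-- The probability measure `m_x^α`: mass `α` at `x`, mass `(1-α)/d_x` at each
neighbor of `x`, and `0` elsewhere. -/
def mMeas {V : Type*} [Fintype V] [DecidableEq V] (G : SimpleGraph V)
    [DecidableRel G.Adj] (α : ℝ) (x : V) : V → ℝ :=
  fun z => if z = x then α else if G.Adj x z then (1 - α) / (G.degree x : ℝ) else 0

/-- The `α`-Ricci curvature `κ_α(x,y) = 1 - W(m_x^α, m_y^α)/d(x,y)`. -/
def kappaAlpha {V : Type*} [Fintype V] [DecidableEq V] (G : SimpleGraph V)
    [DecidableRel G.Adj] (α : ℝ) (x y : V) : ℝ :=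
  1 - Wass G (mMeas G α x) (mMeas G α y) / (G.dist x y : ℝ)

/-- The Lin–Lu–Yau Ricci curvature `κ(x,y) = lim_{α→1⁻} κ_α(x,y)/(1-α)`. -/
def kappa {V : Type*} [Fintype V] [DecidableEq V] (G : SimpleGraph V)
    [DecidableRel G.Adj] (x y : V) : ℝ :=
  limUnder (𝓝[<] (1 : ℝ)) (fun α => kappaAlpha G α x y / (1 - α))

/-- The (non-normalized) graph Laplacian `(Δf)(x) = d_x f(x) - ∑_{y ~ x} f(y)`. -/
def lap {V : Type*} [Fintype V] [DecidableEq V] (G : SimpleGraph V)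
    [DecidableRel G.Adj] (f : V → ℝ) (x : V) : ℝ :=
  (G.degree x : ℝ) * f x - ∑ y ∈ G.neighborFinset x, f y

end

/-!
Let `f` be an eigenfunction and `(x, y)` an edge along which `f` increases the most, by `L > 0`;
then `f` is `L`-Lipschitz for the graph distance. The means of `f` under the lazy walks are
`f x - (1 - α) λ f x / d_x`, so the easy half of Kantorovich duality gives, in the limit `α → 1`,
`κ₀ L ≤ κ(x, y) L ≤ λ (f x / d_x - f y / d_y)`; the limit exists because `κ_α / (1 - α)` is
monotone and bounded by `2`. Since `∑ f = 0` and the diameter is at most `2 / κ₀` (discrete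
Bonnet–Myers, proved by telescoping the same estimate along a geodesic), `|f y| ≤ 2 L / κ₀`,
which bounds the right-hand side by `λ L (κ₀ d_max + 2 (d_max - d_min)) / (κ₀ d_min d_max)`;
finally `λ > 0` as the Laplacian is positive semidefinite.
-/

open SimpleGraph

section Wasserstein

variable {V : Type*} [Fintype V] (G : SimpleGraph V)

lemma wass_le_of_isCoupling {μ ν : V → ℝ} {A : V → V → ℝ} (hA : IsCoupling A μ ν) :
    Wass G μ ν ≤ ∑ x, ∑ y, A x y * G.dist x y := by
  refine csInf_le ⟨0, ?_⟩ ⟨A, hA, rfl⟩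
  rintro _ ⟨B, hB, rfl⟩
  exact sum_nonneg fun x _ => sum_nonneg fun y _ => mul_nonneg (hB.1 x y).1 (Nat.cast_nonneg _)

lemma le_wass_of_forall_isCoupling {μ ν : V → ℝ} {b : ℝ} (hne : ∃ A, IsCoupling A μ ν)
    (hb : ∀ A, IsCoupling A μ ν → b ≤ ∑ x, ∑ y, A x y * G.dist x y) : b ≤ Wass G μ ν := by
  obtain ⟨A, hA⟩ := hne
  refine le_csInf ⟨_, A, hA, rfl⟩ ?_
  rintro _ ⟨B, hB, rfl⟩
  exact hb B hB

lemma IsCoupling.sum_mul_sub_sum_mul_le {μ ν : V → ℝ} {A : V → V → ℝ} (hA : IsCoupling A μ ν)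
    {g : V → ℝ} {L : ℝ} (hg : ∀ u v, g u - g v ≤ L * G.dist u v) :
    ∑ u, μ u * g u - ∑ v, ν v * g v ≤ L * ∑ u, ∑ v, A u v * G.dist u v := by
  have hμ : ∑ u, μ u * g u = ∑ u, ∑ v, A u v * g u := by
    simp_rw [← hA.2.1, sum_mul]
  have hν : ∑ v, ν v * g v = ∑ u, ∑ v, A u v * g v := by
    rw [sum_comm]
    simp_rw [← hA.2.2, sum_mul]
  rw [hμ, hν, ← sum_sub_distrib, mul_sum]
  refine sum_le_sum fun u _ => ?_
  rw [← sum_sub_distrib, mul_sum]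
  refine sum_le_sum fun v _ => ?_
  calc A u v * g u - A u v * g v = A u v * (g u - g v) := by ring
    _ ≤ A u v * (L * G.dist u v) := mul_le_mul_of_nonneg_left (hg u v) (hA.1 u v).1
    _ = L * (A u v * G.dist u v) := by ring

/-- Kantorovich duality, easy direction. -/
lemma sum_mul_sub_sum_mul_le_mul_wass {μ ν : V → ℝ} (hne : ∃ A, IsCoupling A μ ν)
    {g : V → ℝ} {L : ℝ} (hL : 0 < L) (hg : ∀ u v, g u - g v ≤ L * G.dist u v) :
    ∑ u, μ u * g u - ∑ v, ν v * g v ≤ L * Wass G μ ν := by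
  rw [← div_le_iff₀' hL]
  exact le_wass_of_forall_isCoupling G hne fun A hA =>
    (div_le_iff₀' hL).2 (hA.sum_mul_sub_sum_mul_le G hg)

variable {G}

lemma isCoupling_mul {μ ν : V → ℝ} (hμ : ∀ z, 0 ≤ μ z) (hν : ∀ z, 0 ≤ ν z)
    (hμ1 : ∑ z, μ z = 1) (hν1 : ∑ z, ν z = 1) :
    IsCoupling (fun u v => μ u * ν v) μ ν := by
  have hle : ∀ {ρ : V → ℝ}, (∀ z, 0 ≤ ρ z) → ∑ z, ρ z = 1 → ∀ z, ρ z ≤ 1 := fun h0 h1 z =>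
    h1 ▸ single_le_sum (fun z _ => h0 z) (mem_univ z)
  refine ⟨fun u v => ⟨mul_nonneg (hμ u) (hν v), ?_⟩, fun u => ?_, fun v => ?_⟩
  · exact mul_le_one₀ (hle hμ hμ1 u) (hν v) (hle hν hν1 v)
  · rw [← mul_sum, hν1, mul_one]
  · rw [← sum_mul, hμ1, one_mul]

lemma IsCoupling.mix_dirac [DecidableEq V] {μ ν : V → ℝ} {A : V → V → ℝ}
    (hA : IsCoupling A μ ν) {c : ℝ} (hc0 : 0 ≤ c) (hc1 : c ≤ 1) (x y : V) :
    IsCoupling (fun u v => c * A u v + (1 - c) * if u = x ∧ v = y then 1 else 0)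
      (fun u => c * μ u + (1 - c) * if u = x then 1 else 0)
      (fun v => c * ν v + (1 - c) * if v = y then 1 else 0) := by
  refine ⟨fun u v => ?_, fun u => ?_, fun v => ?_⟩
  · obtain ⟨h0, h1⟩ := hA.1 u v
    dsimp only
    split_ifs <;> constructor <;> nlinarith
  · by_cases hu : u = x <;> simp [sum_add_distrib, ← mul_sum, hA.2.1, hu]
  · simp [sum_add_distrib, ← mul_sum, hA.2.2, ite_and]

lemma wass_mix_dirac_le [DecidableEq V] {μ ν : V → ℝ} (hne : ∃ A, IsCoupling A μ ν)
    {c : ℝ} (hc0 : 0 < c) (hc1 : c ≤ 1) (x y : V) :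
    Wass G (fun u => c * μ u + (1 - c) * if u = x then 1 else 0)
        (fun v => c * ν v + (1 - c) * if v = y then 1 else 0)
      ≤ c * Wass G μ ν + (1 - c) * G.dist x y := by
  rw [← sub_le_iff_le_add, ← div_le_iff₀' hc0]
  refine le_wass_of_forall_isCoupling G hne fun A hA => ?_
  rw [div_le_iff₀' hc0, sub_le_iff_le_add]
  refine (wass_le_of_isCoupling G (hA.mix_dirac hc0.le hc1 x y)).trans_eq ?_
  simp only [add_mul, sum_add_distrib, mul_assoc, ← mul_sum, ite_mul, one_mul, zero_mul,
    ite_and, sum_ite_eq', mem_univ, if_true, sum_ite_irrel, sum_const_zero]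

end Wasserstein

section RandomWalk

variable {V : Type*} [Fintype V] [DecidableEq V] (G : SimpleGraph V) [DecidableRel G.Adj]

lemma sum_mMeas_mul (α : ℝ) (x : V) (g : V → ℝ) :
    ∑ z, mMeas G α x z * g z = α * g x + (1 - α) / G.degree x * ∑ z ∈ G.neighborFinset x, g z := by
  have hsplit : ∀ z, mMeas G α x z * g z
      = (if z = x then α * g x else 0) + if G.Adj x z then (1 - α) / G.degree x * g z else 0 := by
    intro z
    by_cases hz : z = x
    · subst hz
      simp [mMeas]
    · by_cases ha : G.Adj x z <;> simp [mMeas, hz, ha]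
  simp only [hsplit, sum_add_distrib, sum_ite_eq', mem_univ, if_true, ← sum_filter,
    ← neighborFinset_eq_filter, mul_sum]

variable {G}

lemma mMeas_nonneg {α : ℝ} (hα0 : 0 ≤ α) (hα1 : α ≤ 1) (x z : V) : 0 ≤ mMeas G α x z := by
  unfold mMeas
  split_ifs
  · exact hα0
  · exact div_nonneg (sub_nonneg.2 hα1) (Nat.cast_nonneg _)
  · exact le_rfl

lemma sum_mMeas {x : V} (hx : 0 < G.degree x) (α : ℝ) : ∑ z, mMeas G α x z = 1 := by
  have hx' : (G.degree x : ℝ) ≠ 0 := by positivity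
  simpa [sum_const, card_neighborFinset_eq_degree, field] using sum_mMeas_mul G α x fun _ => 1

lemma exists_isCoupling_mMeas (hdeg : ∀ z, 0 < G.degree z) {α : ℝ} (hα0 : 0 ≤ α) (hα1 : α ≤ 1)
    (x y : V) : ∃ A, IsCoupling A (mMeas G α x) (mMeas G α y) :=
  ⟨_, isCoupling_mul (mMeas_nonneg hα0 hα1 x) (mMeas_nonneg hα0 hα1 y)
    (sum_mMeas (hdeg x) α) (sum_mMeas (hdeg y) α)⟩

lemma mMeas_eq_mix_dirac {α α' c : ℝ} (h : 1 - α' = c * (1 - α)) (x : V) :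
    mMeas G α' x = fun z => c * mMeas G α x z + (1 - c) * if z = x then 1 else 0 := by
  funext z
  unfold mMeas
  split_ifs
  · linarith
  · rw [h]; ring
  · ring

lemma sum_mMeas_mul_dist_self {w : V} (hw : 0 < G.degree w) (α : ℝ) :
    ∑ z, mMeas G α w z * G.dist z w = 1 - α := by
  have hw' : (G.degree w : ℝ) ≠ 0 := by positivity
  have hnbr : ∑ z ∈ G.neighborFinset w, (G.dist z w : ℝ) = G.degree w := by
    rw [sum_congr rfl fun z hz => by
      rw [dist_comm, dist_eq_one_iff_adj.2 ((mem_neighborFinset _ _ _).1 hz)]]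
    simp
  rw [sum_mMeas_mul, hnbr, dist_self]
  field_simp
  ring

lemma dist_sub_le_sum_mMeas_mul_dist (hconn : G.Connected) {u : V} (hu : 0 < G.degree u)
    {α : ℝ} (hα1 : α ≤ 1) (w : V) :
    G.dist u w - (1 - α) ≤ ∑ z, mMeas G α u z * G.dist z w := by
  have hu' : (0 : ℝ) < G.degree u := by exact_mod_cast hu
  have hnbr : (G.degree u : ℝ) * (G.dist u w - 1) ≤ ∑ z ∈ G.neighborFinset u, (G.dist z w : ℝ) := by
    have := card_nsmul_le_sum (G.neighborFinset u) (fun z => (G.dist z w : ℝ)) (G.dist u w - 1)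
      fun z hz => by
        have htri := hconn.dist_triangle (u := u) (v := z) (w := w)
        rw [dist_eq_one_iff_adj.2 ((mem_neighborFinset _ _ _).1 hz)] at htri
        have : (G.dist u w : ℝ) ≤ 1 + G.dist z w := by exact_mod_cast htri
        linarith
    simpa using this
  rw [sum_mMeas_mul]
  calc (G.dist u w : ℝ) - (1 - α)
      = α * G.dist u w + (1 - α) / G.degree u * (G.degree u * (G.dist u w - 1)) := by
        field_simp; ring
    _ ≤ _ := by gcongr

end RandomWalk

section Curvature

variable {V : Type*} [Fintype V] [DecidableEq V] {G : SimpleGraph V} [DecidableRel G.Adj]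

lemma kappaAlpha_of_adj {x y : V} (h : G.Adj x y) (α : ℝ) :
    kappaAlpha G α x y = 1 - Wass G (mMeas G α x) (mMeas G α y) := by
  simp [kappaAlpha, dist_eq_one_iff_adj.2 h]

variable (hdeg : ∀ z, 0 < G.degree z)
include hdeg

/-- `m^{α'}` mixes `m^α` with a Dirac mass (`mMeas_eq_mix_dirac`), and the Dirac masses at `x`
and `y` are coupled at cost `d(x, y) = 1`. -/
lemma monotoneOn_kappaAlpha_div {x y : V} (h : G.Adj x y) :
    MonotoneOn (fun α => kappaAlpha G α x y / (1 - α)) (Set.Ioo 0 1) := by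
  intro α hα α' hα' hle
  have h1α : 0 < 1 - α := by linarith [hα.2]
  have h1α' : 0 < 1 - α' := by linarith [hα'.2]
  set c := (1 - α') / (1 - α)
  have hc : 1 - α' = c * (1 - α) := (div_mul_cancel₀ _ h1α.ne').symm
  have hW := wass_mix_dirac_le (G := G) (exists_isCoupling_mMeas hdeg hα.1.le hα.2.le x y)
    (div_pos h1α' h1α) ((div_le_one h1α).2 (by linarith)) x y
  rw [← mMeas_eq_mix_dirac hc, ← mMeas_eq_mix_dirac hc, dist_eq_one_iff_adj.2 h] at hW
  simp only [kappaAlpha_of_adj h]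
  rw [div_le_div_iff₀ h1α h1α', hc]
  push_cast at hW
  nlinarith

lemma sum_mMeas_mul_sub_le_length_sub {α : ℝ} (hα0 : 0 ≤ α) (hα1 : α ≤ 1) {g : V → ℝ} {L : ℝ}
    (hL : 0 < L) (hg : ∀ u v, g u - g v ≤ L * G.dist u v) {u w : V} (p : G.Walk u w) :
    ∑ z, mMeas G α u z * g z - ∑ z, mMeas G α w z * g z
      ≤ L * (p.length - (p.darts.map fun d => kappaAlpha G α d.fst d.snd).sum) := by
  induction p with
  | nil => simp
  | @cons a b _ h q ih =>
    have hstep :=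
      sum_mul_sub_sum_mul_le_mul_wass G (exists_isCoupling_mMeas hdeg hα0 hα1 a b) hL hg
    simp only [Walk.length_cons, Walk.darts_cons, List.map_cons, List.sum_cons]
    rw [kappaAlpha_of_adj h]
    push_cast
    linear_combination hstep + ih

/-- The mean of `d(·, w)` drops by at least `d(u, w) - 2 (1 - α)` from `m_u^α` to `m_w^α`. -/
lemma sum_kappaAlpha_darts_le (hconn : G.Connected) {α : ℝ} (hα0 : 0 ≤ α) (hα1 : α ≤ 1)
    {u w : V} (p : G.Walk u w) (hp : p.length = G.dist u w) :
    (p.darts.map fun d => kappaAlpha G α d.fst d.snd).sum ≤ 2 * (1 - α) := by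
  have hlip : ∀ x y : V, (G.dist x w : ℝ) - G.dist y w ≤ 1 * G.dist x y := fun x y => by
    have : (G.dist x w : ℝ) ≤ G.dist x y + G.dist y w := by exact_mod_cast hconn.dist_triangle
    linarith
  have htel := sum_mMeas_mul_sub_le_length_sub hdeg hα0 hα1 one_pos hlip p
  have hu := dist_sub_le_sum_mMeas_mul_dist hconn (hdeg u) hα1 w
  rw [sum_mMeas_mul_dist_self (hdeg w), hp] at htel
  linarith

lemma kappaAlpha_le_of_adj (hconn : G.Connected) {x y : V} (h : G.Adj x y) {α : ℝ}
    (hα0 : 0 ≤ α) (hα1 : α ≤ 1) : kappaAlpha G α x y ≤ 2 * (1 - α) := by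
  simpa using sum_kappaAlpha_darts_le hdeg hconn hα0 hα1 (Walk.cons h Walk.nil)
    (by simp [dist_eq_one_iff_adj.2 h])

lemma tendsto_kappaAlpha_div (hconn : G.Connected) {x y : V} (h : G.Adj x y) :
    Tendsto (fun α => kappaAlpha G α x y / (1 - α)) (𝓝[<] 1) (𝓝 (kappa G x y)) := by
  have hbdd : BddAbove ((fun α => kappaAlpha G α x y / (1 - α)) '' Set.Ioo 0 1) := by
    refine ⟨2, ?_⟩
    rintro _ ⟨α, hα, rfl⟩
    exact (div_le_iff₀ (sub_pos.2 hα.2)).2 (kappaAlpha_le_of_adj hdeg hconn h hα.1.le hα.2.le)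
  have ht := (monotoneOn_kappaAlpha_div hdeg h).tendsto_nhdsWithin_Ioo_left
    ⟨1 / 2, by norm_num⟩ hbdd
  rwa [kappa, ht.limUnder_eq]

/-- Discrete Bonnet–Myers theorem. -/
theorem mul_dist_le_two_of_le_kappa (hconn : G.Connected) {κ₀ : ℝ}
    (h : ∀ x y, G.Adj x y → κ₀ ≤ kappa G x y) (u v : V) : κ₀ * G.dist u v ≤ 2 := by
  obtain ⟨p, hp⟩ := hconn.exists_walk_length_eq_dist u v
  have hlim := tendsto_list_sum p.darts fun d _ => tendsto_kappaAlpha_div hdeg hconn d.adj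
  have hle : (p.darts.map fun d => kappa G d.fst d.snd).sum ≤ 2 := by
    refine le_of_tendsto hlim ?_
    filter_upwards [Ioo_mem_nhdsLT zero_lt_one] with α hα
    simp only [div_eq_mul_inv, List.sum_map_mul_right]
    rw [← div_eq_mul_inv, div_le_iff₀ (sub_pos.2 hα.2)]
    exact sum_kappaAlpha_darts_le hdeg hconn hα.1.le hα.2.le p hp
  calc κ₀ * G.dist u v = (p.darts.map fun _ => κ₀).sum := by simp [hp, mul_comm]
    _ ≤ _ := List.sum_le_sum fun d _ => h _ _ d.adj
    _ ≤ 2 := hle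

end Curvature

section Lipschitz

lemma sub_le_mul_length_of_forall_adj {V : Type*} {G : SimpleGraph V} {f : V → ℝ} {L : ℝ}
    (hadj : ∀ u v, G.Adj u v → f u - f v ≤ L) {u v : V} (p : G.Walk u v) :
    f u - f v ≤ L * p.length := by
  induction p with
  | nil => simp
  | @cons a b _ h q ih =>
    rw [Walk.length_cons]
    push_cast
    linarith [hadj a b h]

lemma sub_le_mul_dist_of_forall_adj {V : Type*} {G : SimpleGraph V} (hconn : G.Connected)
    {f : V → ℝ} {L : ℝ} (hadj : ∀ u v, G.Adj u v → f u - f v ≤ L) (u v : V) :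
    f u - f v ≤ L * G.dist u v := by
  obtain ⟨p, hp⟩ := hconn.exists_walk_length_eq_dist u v
  simpa [hp] using sub_le_mul_length_of_forall_adj hadj p

lemma abs_le_of_sum_eq_zero {V : Type*} [Fintype V] [Nonempty V] {g : V → ℝ} {D : ℝ}
    (hg : ∀ u v, g u - g v ≤ D) (hsum : ∑ x, g x = 0) (z : V) : |g z| ≤ D := by
  obtain ⟨a, -, ha⟩ := exists_le_of_sum_le univ_nonempty (f := g) (g := 0) (by simp [hsum])
  obtain ⟨b, -, hb⟩ := exists_le_of_sum_le univ_nonempty (f := 0) (g := g) (by simp [hsum])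
  rw [Pi.zero_apply] at ha hb
  rw [abs_le]
  constructor <;> linarith [hg z a, hg b z]

lemma exists_adj_forall_adj_sub_le {V : Type*} [Fintype V] {G : SimpleGraph V} [DecidableRel G.Adj]
    (hdeg : ∀ z, 0 < G.degree z) [Nonempty V] (f : V → ℝ) :
    ∃ x y, G.Adj x y ∧ ∀ u v, G.Adj u v → f u - f v ≤ f x - f y := by
  obtain ⟨w, hw⟩ := (G.degree_pos_iff_exists_adj (Classical.arbitrary V)).1 (hdeg _)
  have : Nonempty G.Dart := ⟨⟨(_, w), hw⟩⟩
  obtain ⟨d, hd⟩ := Finite.exists_max fun d : G.Dart => f d.fst - f d.snd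
  exact ⟨d.fst, d.snd, d.adj, fun u v huv => hd ⟨(u, v), huv⟩⟩

section MeanZero

variable {V : Type*} [Fintype V] [Nonempty V] {G : SimpleGraph V} (hconn : G.Connected)
  {f : V → ℝ} (hsum : ∑ x, f x = 0) {x y : V} (hmax : ∀ u v, G.Adj u v → f u - f v ≤ f x - f y)
include hconn hsum hmax

lemma sub_pos_of_forall_adj_sub_le (hf : f ≠ 0) : 0 < f x - f y := by
  by_contra! hL
  refine hf (funext fun z => abs_nonpos_iff.1 (abs_le_of_sum_eq_zero (fun u v => ?_) hsum z))
  exact (sub_le_mul_dist_of_forall_adj hconn hmax u v).trans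
    (mul_nonpos_of_nonpos_of_nonneg hL (Nat.cast_nonneg _))

lemma abs_le_of_forall_adj_sub_le {κ₀ : ℝ} (hκ₀ : 0 < κ₀) (hdiam : ∀ u v, κ₀ * G.dist u v ≤ 2)
    (hL : 0 ≤ f x - f y) (z : V) : |f z| ≤ 2 / κ₀ * (f x - f y) := by
  refine abs_le_of_sum_eq_zero (fun u v => (sub_le_mul_dist_of_forall_adj hconn hmax u v).trans ?_)
    hsum z
  rw [div_mul_eq_mul_div, le_div_iff₀ hκ₀]
  nlinarith [hdiam u v]

end MeanZero

end Lipschitz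

section Eigenfunction

open Matrix

variable {V : Type*} [Fintype V] [DecidableEq V] {G : SimpleGraph V} [DecidableRel G.Adj]

lemma lap_eq_lapMatrix_mulVec (f : V → ℝ) : lap G f = G.lapMatrix ℝ *ᵥ f :=
  funext fun x => (G.lapMatrix_mulVec_apply x f).symm

lemma sum_lap_eq_zero (f : V → ℝ) : ∑ x, lap G f x = 0 := by
  have h1 : (fun _ => (1 : ℝ)) ᵥ* G.lapMatrix ℝ = 0 := by
    rw [← Matrix.mulVec_transpose, (G.isSymm_lapMatrix (R := ℝ)).eq, lapMatrix_mulVec_const_eq_zero]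
  calc ∑ x, lap G f x = (fun _ => (1 : ℝ)) ⬝ᵥ (G.lapMatrix ℝ *ᵥ f) := by
        simp [lap_eq_lapMatrix_mulVec, dotProduct]
    _ = 0 := by rw [Matrix.dotProduct_mulVec, h1, zero_dotProduct]

lemma sum_mul_lap_nonneg (f : V → ℝ) : 0 ≤ ∑ x, f x * lap G f x := by
  simpa [lap_eq_lapMatrix_mulVec, dotProduct] using
    (posSemidef_lapMatrix ℝ G).dotProduct_mulVec_nonneg f

variable {f : V → ℝ} {lam : ℝ} (heig : ∀ x, lap G f x = lam * f x)
include heig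

lemma sum_eq_zero_of_lap_eq_mul (hlam : lam ≠ 0) : ∑ x, f x = 0 := by
  have : lam * ∑ x, f x = 0 := by
    rw [mul_sum, ← sum_lap_eq_zero (G := G) f]
    simp [heig]
  exact (mul_eq_zero.1 this).resolve_left hlam

lemma pos_of_lap_eq_mul (hlam : lam ≠ 0) (hf : f ≠ 0) : 0 < lam := by
  obtain ⟨x, hx⟩ := Function.ne_iff.1 hf
  have hsq : 0 < ∑ x, f x * f x :=
    sum_pos' (fun x _ => mul_self_nonneg _) ⟨x, mem_univ x, mul_self_pos.2 hx⟩
  have : 0 ≤ lam * ∑ x, f x * f x := by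
    simpa [mul_sum, heig, mul_left_comm] using sum_mul_lap_nonneg (G := G) f
  exact lt_of_le_of_ne (nonneg_of_mul_nonneg_left this hsq) (Ne.symm hlam)

lemma sum_mMeas_mul_of_lap_eq_mul {x : V} (hx : 0 < G.degree x) (α : ℝ) :
    ∑ z, mMeas G α x z * f z = f x - (1 - α) * (lam * f x / G.degree x) := by
  have hnbr : ∑ y ∈ G.neighborFinset x, f y = G.degree x * f x - lam * f x := by
    rw [← heig x, lap]
    ring
  have hx' : (G.degree x : ℝ) ≠ 0 := by positivity
  rw [sum_mMeas_mul, hnbr]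
  field_simp
  ring

lemma kappa_mul_le_of_forall_adj (hdeg : ∀ z, 0 < G.degree z) (hconn : G.Connected) {x y : V}
    (hxy : G.Adj x y) (hL : 0 < f x - f y) (hmax : ∀ u v, G.Adj u v → f u - f v ≤ f x - f y) :
    kappa G x y * (f x - f y) ≤ lam * (f x / G.degree x - f y / G.degree y) := by
  refine le_of_tendsto ((tendsto_kappaAlpha_div hdeg hconn hxy).mul_const _) ?_
  filter_upwards [Ioo_mem_nhdsLT zero_lt_one] with α hα
  have hW := sum_mul_sub_sum_mul_le_mul_wass G (exists_isCoupling_mMeas hdeg hα.1.le hα.2.le x y)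
    hL (sub_le_mul_dist_of_forall_adj hconn hmax)
  rw [sum_mMeas_mul_of_lap_eq_mul heig (hdeg x), sum_mMeas_mul_of_lap_eq_mul heig (hdeg y)] at hW
  rw [div_mul_eq_mul_div, div_le_iff₀ (sub_pos.2 hα.2), kappaAlpha_of_adj hxy]
  linear_combination hW

end Eigenfunction

lemma div_le_of_mul_le_mul_div_sub_div {κ₀ L lam δ Δ dx dy a b : ℝ} (hκ₀ : 0 < κ₀) (hL : 0 < L)
    (hlam : 0 < lam) (hδ : 0 < δ) (hδx : δ ≤ dx) (hxΔ : dx ≤ Δ) (hδy : δ ≤ dy) (hyΔ : dy ≤ Δ)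
    (hab : a - b = L) (hb : |b| ≤ 2 / κ₀ * L) (h : κ₀ * L ≤ lam * (a / dx - b / dy)) :
    Δ * δ * κ₀ ^ 2 / (κ₀ * Δ + 2 * (Δ - δ)) ≤ lam := by
  have hdx : 0 < dx := hδ.trans_le hδx
  have hdy : 0 < dy := hδ.trans_le hδy
  have hΔ : 0 < Δ := hdx.trans_le hxΔ
  have hgap : |1 / dx - 1 / dy| ≤ 1 / δ - 1 / Δ := by
    rw [abs_sub_le_iff]
    constructor <;> linarith [one_div_le_one_div_of_le hdx hxΔ, one_div_le_one_div_of_le hδ hδx,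
      one_div_le_one_div_of_le hdy hyΔ, one_div_le_one_div_of_le hδ hδy]
  have hT : a / dx - b / dy ≤ L / δ + 2 / κ₀ * L * (1 / δ - 1 / Δ) := calc
    a / dx - b / dy = L / dx + b * (1 / dx - 1 / dy) := by rw [← hab]; ring
    _ ≤ L / δ + |b| * |1 / dx - 1 / dy| :=
      add_le_add (div_le_div_of_nonneg_left hL.le hδ hδx) ((le_abs_self _).trans (abs_mul _ _).le)
    _ ≤ _ := by gcongr
  have key : κ₀ * L * (κ₀ * δ * Δ) ≤ lam * L * (κ₀ * Δ + 2 * (Δ - δ)) := by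
    rw [← le_div_iff₀ (by positivity)]
    calc κ₀ * L ≤ lam * (a / dx - b / dy) := h
      _ ≤ lam * (L / δ + 2 / κ₀ * L * (1 / δ - 1 / Δ)) := by gcongr
      _ = _ := by field_simp
  rw [div_le_iff₀ (by nlinarith)]
  exact le_of_mul_le_mul_left (by linear_combination key) hL

theorem stmt13 {V : Type*} [Fintype V] [DecidableEq V] [Nonempty V]
    (G : SimpleGraph V) [DecidableRel G.Adj]
    (hconn : G.Connected) (hcard : 1 < Fintype.card V)
    (κ₀ : ℝ) (hκ₀ : 0 < κ₀) (h : ∀ x y : V, G.Adj x y → κ₀ ≤ kappa G x y)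
    (lam : ℝ) (hlam : lam ≠ 0) (f : V → ℝ) (hf : f ≠ 0)
    (heig : ∀ x, lap G f x = lam * f x) :
    ((Finset.univ.sup' Finset.univ_nonempty fun v => G.degree v : ℕ) : ℝ) *
        ((Finset.univ.inf' Finset.univ_nonempty fun v => G.degree v : ℕ) : ℝ) * κ₀ ^ 2 /
      (κ₀ * ((Finset.univ.sup' Finset.univ_nonempty fun v => G.degree v : ℕ) : ℝ) +
        2 * (((Finset.univ.sup' Finset.univ_nonempty fun v => G.degree v : ℕ) : ℝ) -
              ((Finset.univ.inf' Finset.univ_nonempty fun v => G.degree v : ℕ) : ℝ))) ≤ lam := by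
  have : Nontrivial V := Fintype.one_lt_card_iff_nontrivial.1 hcard
  have hdeg : ∀ z, 0 < G.degree z := fun z => hconn.preconnected.degree_pos_of_nontrivial z
  have hsum := sum_eq_zero_of_lap_eq_mul heig hlam
  obtain ⟨x, y, hxy, hmax⟩ := exists_adj_forall_adj_sub_le hdeg f
  have hL := sub_pos_of_forall_adj_sub_le hconn hsum hmax hf
  have hκL : κ₀ * (f x - f y) ≤ lam * (f x / G.degree x - f y / G.degree y) :=
    (mul_le_mul_of_nonneg_right (h x y hxy) hL.le).trans
      (kappa_mul_le_of_forall_adj heig hdeg hconn hxy hL hmax)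
  have hdmin : ∀ v, ((univ.inf' univ_nonempty fun v => G.degree v : ℕ) : ℝ) ≤ G.degree v :=
    fun v => by exact_mod_cast inf'_le _ (mem_univ v)
  have hdmax : ∀ v, (G.degree v : ℝ) ≤ ((univ.sup' univ_nonempty fun v => G.degree v : ℕ) : ℝ) :=
    fun v => by exact_mod_cast le_sup' (fun v => G.degree v) (mem_univ v)
  have hbound := abs_le_of_forall_adj_sub_le hconn hsum hmax hκ₀
    (mul_dist_le_two_of_le_kappa hdeg hconn h) hL.le y
  exact div_le_of_mul_le_mul_div_sub_div hκ₀ hL (pos_of_lap_eq_mul heig hlam hf)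
    (by exact_mod_cast (lt_inf'_iff _).2 fun v _ => hdeg v) (hdmin x) (hdmax x) (hdmin y) (hdmax y)
    rfl hbound hκL
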